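/- arXiv:2510.20802 — 3 statements merged into one kernel-verified Lean document; each statement's English description precedes it below -/
import Mathlib

section
/- Every long-refinement graph G on at least 2 vertices has exactly two distinct vertex degrees, i.e., |{deg(v) : v ∈ V(G)}| = 2. -/
variable {V : Type*}

/-- Colour Refinement equivalence: `crRel G i u v` means `u` and `v` get the same colour
after `i` iterations of Colour Refinement on `G` (starting monochromatic). -/
def crRel (G : SimpleGraph V) : ℕ → V → V → Prop
  | 0 => fun _ _ => True
  | (i+1) => fun u v => crRel G i u v ∧ ∀ w : V,
      Nat.card {x : V // G.Adj u x ∧ crRel G i x w} =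
      Nat.card {x : V // G.Adj v x ∧ crRel G i x w}

/-- The colour class of `v` after `i` iterations. -/
def crClass (G : SimpleGraph V) (i : ℕ) (v : V) : Set V :=
  {u : V | crRel G i u v}

/-- The partition `π^i` induced by the colouring after `i` iterations. -/
def crPartition (G : SimpleGraph V) (i : ℕ) : Set (Set V) :=
  {C : Set V | ∃ v : V, C = crClass G i v}

/-- `G` is a long-refinement graph: Colour Refinement takes exactly `n - 1` iterations
to stabilise. -/
def IsLongRefinement [Fintype V] (G : SimpleGraph V) : Prop :=
  (∀ i < Fintype.card V - 1, crPartition G (i+1) ≠ crPartition G i) ∧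
  crPartition G (Fintype.card V) = crPartition G (Fintype.card V - 1)

/-- The degree of a vertex. -/
noncomputable def vdeg (G : SimpleGraph V) (v : V) : ℕ :=
  Nat.card {u : V // G.Adj v u}

/-- `degOn G C C' k` : every vertex of `C` has exactly `k` neighbours in `C'`,
i.e. `deg_{C'}(C) = k`. -/
def degOn (G : SimpleGraph V) (C C' : Set V) (k : ℕ) : Prop :=
  ∀ v ∈ C, Nat.card {x : V // x ∈ C' ∧ G.Adj v x} = k

/-- `C` is balanced with respect to `C'`: `deg_{C'}(C)` is defined. -/
def BalancedWrt (G : SimpleGraph V) (C C' : Set V) : Prop :=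
  ∃ k, degOn G C C' k

/-! The number of Colour Refinement classes starts at 1 (for a nonempty graph), never decreases,
is at most `n`, and in a long-refinement graph strictly increases in each of the first `n - 1`
rounds. It therefore grows by exactly one per round, so `π^1`, the partition by degree, has
exactly two classes. -/

namespace Setoid

variable {α : Type*} {r s : Setoid α}

lemma card_quotient_le_of_le [Finite (Quotient r)] (h : r ≤ s) :
    Nat.card (Quotient s) ≤ Nat.card (Quotient r) :=
  Nat.card_le_card_of_surjective (Quotient.map' id h) fun q =>
    q.inductionOn fun a => ⟨Quotient.mk'' a, rfl⟩

lemma eq_of_le_of_card_quotient_le [Finite (Quotient r)] (h : r ≤ s)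
    (hc : Nat.card (Quotient r) ≤ Nat.card (Quotient s)) : r = s := by
  have hsurj : Function.Surjective (Quotient.map' id h : Quotient r → Quotient s) := fun q =>
    q.inductionOn fun a => ⟨Quotient.mk'' a, rfl⟩
  refine le_antisymm h fun a b hab => Quotient.exact' ((hsurj.bijective_of_nat_card_le hc).1 ?_)
  exact Quotient.sound' hab

lemma card_quotient_lt_of_lt [Finite (Quotient r)] (h : r < s) :
    Nat.card (Quotient s) < Nat.card (Quotient r) :=
  (card_quotient_le_of_le h.le).lt_of_ne fun hc => h.ne (eq_of_le_of_card_quotient_le h.le hc.ge)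

end Setoid

lemma add_le_apply_add_of_forall_lt_succ {f : ℕ → ℕ} {a k : ℕ}
    (hf : ∀ i < k, f (a + i) < f (a + i + 1)) : f a + k ≤ f (a + k) := by
  induction k with
  | zero => rfl
  | succ k ih =>
    have := hf k k.lt_succ_self
    have := ih fun i hi => hf i (hi.trans k.lt_succ_self)
    change f a + (k + 1) ≤ f (a + k + 1)
    omega

section ColourRefinement

variable (G : SimpleGraph V)

lemma crRel_refl : ∀ i (v : V), crRel G i v v
  | 0, _ => trivial
  | i + 1, v => ⟨crRel_refl i v, fun _ => rfl⟩

lemma crRel_symm : ∀ i {u v : V}, crRel G i u v → crRel G i v u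
  | 0, _, _, _ => trivial
  | i + 1, _, _, h => ⟨crRel_symm i h.1, fun w => (h.2 w).symm⟩

lemma crRel_trans : ∀ i {u v w : V}, crRel G i u v → crRel G i v w → crRel G i u w
  | 0, _, _, _, _, _ => trivial
  | i + 1, _, _, _, h, h' => ⟨crRel_trans i h.1 h'.1, fun w => (h.2 w).trans (h'.2 w)⟩

def crSetoid (i : ℕ) : Setoid V :=
  ⟨crRel G i, ⟨crRel_refl G i, crRel_symm G i, crRel_trans G i⟩⟩

lemma crPartition_eq_classes (i : ℕ) : crPartition G i = (crSetoid G i).classes := rfl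

lemma crSetoid_zero : crSetoid G 0 = ⊤ :=
  Setoid.eq_top_iff.mpr fun _ _ => trivial

lemma crSetoid_succ_le (i : ℕ) : crSetoid G (i + 1) ≤ crSetoid G i :=
  fun _ _ h => h.1

lemma crSetoid_one [Nonempty V] : crSetoid G 1 = Setoid.ker (vdeg G) := by
  have card_adj_crRel_zero (u w : V) :
      Nat.card {x : V // G.Adj u x ∧ crRel G 0 x w} = vdeg G u :=
    Nat.card_congr (Equiv.subtypeEquivRight fun _ => and_iff_left trivial)
  ext u v
  simp only [Setoid.ker_def]
  change crRel G 0 u v ∧ _ ↔ _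
  simp only [card_adj_crRel_zero]
  exact ⟨fun h => h.2 (Classical.arbitrary V), fun h => ⟨trivial, fun _ => h⟩⟩

lemma ncard_range_vdeg [Nonempty V] :
    (Set.range (vdeg G)).ncard = Nat.card (Quotient (crSetoid G 1)) := by
  rw [crSetoid_one, ← Nat.card_coe_set_eq]
  exact (Nat.card_congr (Setoid.quotientKerEquivRange _)).symm

lemma card_quotient_crSetoid_zero [Nonempty V] : Nat.card (Quotient (crSetoid G 0)) = 1 := by
  rw [Nat.card_eq_one_iff_unique]
  exact ⟨Quotient.subsingleton_iff.mpr (crSetoid_zero G), ⟨Quotient.mk'' (Classical.arbitrary V)⟩⟩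

lemma card_quotient_crSetoid_le [Fintype V] (i : ℕ) :
    Nat.card (Quotient (crSetoid G i)) ≤ Fintype.card V :=
  Nat.card_eq_fintype_card (α := V) ▸
    Nat.card_le_card_of_surjective _ Quotient.mk_surjective

lemma card_quotient_crSetoid_lt_succ [Finite V] {i : ℕ}
    (h : crPartition G (i + 1) ≠ crPartition G i) :
    Nat.card (Quotient (crSetoid G i)) < Nat.card (Quotient (crSetoid G (i + 1))) :=
  Setoid.card_quotient_lt_of_lt <| (crSetoid_succ_le G i).lt_of_ne fun he =>
    h (by rw [crPartition_eq_classes, crPartition_eq_classes, he])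

end ColourRefinement

/-- Every long-refinement graph on at least two vertices has exactly two distinct
vertex degrees. -/
theorem longRefinement_two_degrees [Fintype V] (G : SimpleGraph V)
    (h : IsLongRefinement G) (hn : 2 ≤ Fintype.card V) :
    (Set.range (vdeg G)).ncard = 2 := by
  have : Nonempty V := Fintype.card_pos_iff.mp (by omega)
  set n := Fintype.card V
  set N : ℕ → ℕ := fun i => Nat.card (Quotient (crSetoid G i))
  have hstep : ∀ i < n - 1, N i < N (i + 1) := fun i hi =>
    card_quotient_crSetoid_lt_succ G (h.1 i hi)
  have hchain : N 1 + (n - 2) ≤ N (1 + (n - 2)) :=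
    add_le_apply_add_of_forall_lt_succ fun i hi => hstep (1 + i) (by omega)
  have hlast : N (1 + (n - 2)) ≤ n := card_quotient_crSetoid_le G _
  have hfirst : N 0 < N 1 := hstep 0 (by omega)
  have hzero : N 0 = 1 := card_quotient_crSetoid_zero G
  rw [ncard_range_vdeg]
  change N 1 = 2
  omega
end

section
/- A finite graph G = (V, E) is a long-refinement graph if and only if its edge complement G' = (V, E') is a long-refinement graph, where E' consists of all pairs {u,v} of distinct vertices with {u,v} ∉ E. Moreover, for every i ∈ ℕ, the Colour Refinement partitions satisfy π^i_G = π^i_{G'}. -/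
variable {V : Type*}

/-! In `Gᶜ` a vertex `u` has `|C \ {u}| - d` neighbours in a set `C` in which it has `d`
neighbours in `G`. Two vertices of the same colour lie both in or both outside a colour class
`C`, so `|C \ {u}| = |C \ {v}|`, and their neighbour counts in `C` agree in `G` exactly when they
agree in `Gᶜ`. By induction every Colour Refinement colouring of `G` is that of `Gᶜ`. -/

lemma crRel_equivalence (G : SimpleGraph V) (i : ℕ) : Equivalence (crRel G i) := by
  induction i with
  | zero => exact ⟨fun _ => trivial, fun _ => trivial, fun _ _ => trivial⟩
  | succ i ih =>
    exact ⟨fun _ => ⟨ih.refl _, fun _ => rfl⟩, fun h => ⟨ih.symm h.1, fun w => (h.2 w).symm⟩,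
      fun h h' => ⟨ih.trans h.1 h'.1, fun w => (h.2 w).trans (h'.2 w)⟩⟩

lemma crRel_iff_of_crRel {G : SimpleGraph V} {i : ℕ} {u v : V} (h : crRel G i u v) (w : V) :
    crRel G i u w ↔ crRel G i v w :=
  ⟨(crRel_equivalence G i).trans ((crRel_equivalence G i).symm h),
    (crRel_equivalence G i).trans h⟩

lemma card_ne_and_eq_of_iff [Finite V] {R : V → Prop} {u v : V} (h : R u ↔ R v) :
    Nat.card {x // x ≠ u ∧ R x} = Nat.card {x // x ≠ v ∧ R x} := by
  classical
  refine Nat.card_congr (Equiv.subtypeEquiv (Equiv.swap u v) fun x => ?_)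
  simp only [ne_eq, Equiv.swap_apply_eq_iff, Equiv.swap_apply_right]
  by_cases hxu : x = u
  · subst hxu; simp
  by_cases hxv : x = v
  · subst hxv; simp [hxu, h]
  · rw [Equiv.swap_apply_of_ne_of_ne hxu hxv]

namespace SimpleGraph

lemma card_adj_add_card_compl_adj [Finite V] (G : SimpleGraph V) (R : V → Prop) (u : V) :
    Nat.card {x // G.Adj u x ∧ R x} + Nat.card {x // Gᶜ.Adj u x ∧ R x} =
      Nat.card {x // x ≠ u ∧ R x} := by
  classical
  have hdisj : Disjoint (fun x => G.Adj u x ∧ R x) (fun x => Gᶜ.Adj u x ∧ R x) := by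
    rw [disjoint_iff_inf_le]
    rintro x ⟨⟨hG, -⟩, ⟨hGc, -⟩⟩
    exact hGc.2 hG
  have hsplit : ∀ x, x ≠ u ∧ R x ↔ (G.Adj u x ∧ R x) ∨ (Gᶜ.Adj u x ∧ R x) := by
    intro x
    rw [compl_adj, ne_comm]
    by_cases hG : G.Adj u x
    · simp [hG, hG.ne]
    · simp [hG]
  rw [Nat.card_congr (Equiv.subtypeEquivRight hsplit),
    Nat.card_congr (subtypeOrEquiv _ _ hdisj), Nat.card_sum]

lemma card_compl_adj_eq_iff [Finite V] (G : SimpleGraph V) {R : V → Prop} {u v : V}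
    (h : R u ↔ R v) :
    Nat.card {x // Gᶜ.Adj u x ∧ R x} = Nat.card {x // Gᶜ.Adj v x ∧ R x} ↔
      Nat.card {x // G.Adj u x ∧ R x} = Nat.card {x // G.Adj v x ∧ R x} := by
  have hu := G.card_adj_add_card_compl_adj R u
  have hv := G.card_adj_add_card_compl_adj R v
  have huv := card_ne_and_eq_of_iff h
  omega

end SimpleGraph

lemma crRel_compl [Finite V] (G : SimpleGraph V) : crRel Gᶜ = crRel G := by
  funext i u v
  induction i generalizing u v with
  | zero => rfl
  | succ i ih =>
    simp only [crRel, ih, eq_iff_iff]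
    exact and_congr_right fun h => forall_congr' fun w =>
      G.card_compl_adj_eq_iff (crRel_iff_of_crRel h w)

/-- A graph is a long-refinement graph iff its edge complement is; moreover the
Colour Refinement partitions of a graph and its complement coincide at every
iteration. -/
theorem longRefinement_compl [Fintype V] (G : SimpleGraph V) :
    (IsLongRefinement G ↔ IsLongRefinement Gᶜ) ∧
      ∀ i : ℕ, crPartition G i = crPartition Gᶜ i := by
  have hpart : ∀ i, crPartition G i = crPartition Gᶜ i := fun i => by
    simp only [crPartition, crClass, crRel_compl]
  exact ⟨by simp only [IsLongRefinement, hpart], hpart⟩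
end

section
/- Let G be a long-refinement graph, p minimal with all classes of π^p of size at most 2, and ≺ the splitting order on pairs, P_a and P_b (a < b) the two pairs resulting from the split of C_{p-1}. Then b = a+1 or b = a+2. -/
variable {V : Type*}

namespace CRaux

variable (G : SimpleGraph V)

/-- neighbour count of `u` into a set `S`. -/
noncomputable def cnt (u : V) (S : Set V) : ℕ := {x | G.Adj u x ∧ x ∈ S}.ncard

variable {G}

lemma card_eq_cnt (u w : V) (i : ℕ) :
    Nat.card {x : V // G.Adj u x ∧ crRel G i x w} = cnt G u (crClass G i w) := by
  rw [cnt]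
  rw [← Nat.card_coe_set_eq]
  rfl

lemma crRel_succ_iff {i : ℕ} {u v : V} :
    crRel G (i+1) u v ↔ crRel G i u v ∧
      ∀ w : V, cnt G u (crClass G i w) = cnt G v (crClass G i w) := by
  constructor
  · rintro ⟨h1, h2⟩
    refine ⟨h1, fun w => ?_⟩
    rw [← card_eq_cnt, ← card_eq_cnt]
    exact h2 w
  · rintro ⟨h1, h2⟩
    refine ⟨h1, fun w => ?_⟩
    rw [card_eq_cnt, card_eq_cnt]
    exact h2 w

@[refl] lemma crRel_refl (i : ℕ) (v : V) : crRel G i v v := by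
  induction i with
  | zero => trivial
  | succ i ih => exact ⟨ih, fun _ => rfl⟩

lemma crRel_symm {i : ℕ} {u v : V} (h : crRel G i u v) : crRel G i v u := by
  induction i with
  | zero => trivial
  | succ i ih => exact ⟨ih h.1, fun w => (h.2 w).symm⟩

lemma crRel_trans {i : ℕ} {u v w : V} (h1 : crRel G i u v) (h2 : crRel G i v w) :
    crRel G i u w := by
  induction i with
  | zero => trivial
  | succ i ih => exact ⟨ih h1.1 h2.1, fun z => (h1.2 z).trans (h2.2 z)⟩

lemma mem_crClass_iff {i : ℕ} {u v : V} : u ∈ crClass G i v ↔ crRel G i u v := Iff.rfl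

lemma self_mem_crClass (i : ℕ) (v : V) : v ∈ crClass G i v := crRel_refl i v

lemma crClass_mem_partition (i : ℕ) (v : V) : crClass G i v ∈ crPartition G i := ⟨v, rfl⟩

lemma crClass_nonempty (i : ℕ) (v : V) : (crClass G i v).Nonempty := ⟨v, self_mem_crClass i v⟩

lemma crClass_eq_of_rel {i : ℕ} {u v : V} (h : crRel G i u v) :
    crClass G i u = crClass G i v := by
  ext z
  exact ⟨fun hz => crRel_trans hz h, fun hz => crRel_trans hz (crRel_symm h)⟩

lemma crClass_eq_of_mem {i : ℕ} {X : Set V} (hX : X ∈ crPartition G i) {u : V} (hu : u ∈ X) :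
    crClass G i u = X := by
  obtain ⟨v, rfl⟩ := hX
  exact crClass_eq_of_rel hu

lemma rel_of_mem_same {i : ℕ} {X : Set V} (hX : X ∈ crPartition G i) {u v : V}
    (hu : u ∈ X) (hv : v ∈ X) : crRel G i u v := by
  obtain ⟨w, rfl⟩ := hX
  exact crRel_trans hu (crRel_symm hv)

lemma class_eq_of_mem_mem {i : ℕ} {X Y : Set V} (hX : X ∈ crPartition G i)
    (hY : Y ∈ crPartition G i) {z : V} (hzX : z ∈ X) (hzY : z ∈ Y) : X = Y := by
  rw [← crClass_eq_of_mem hX hzX, ← crClass_eq_of_mem hY hzY]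

lemma partition_nonempty {i : ℕ} {X : Set V} (hX : X ∈ crPartition G i) : X.Nonempty := by
  obtain ⟨v, rfl⟩ := hX; exact crClass_nonempty i v

lemma crRel_mono_succ {i : ℕ} {u v : V} (h : crRel G (i+1) u v) : crRel G i u v := h.1

lemma crRel_mono {i j : ℕ} (hij : i ≤ j) {u v : V} (h : crRel G j u v) : crRel G i u v := by
  induction j with
  | zero => exact (Nat.le_zero.mp hij) ▸ h
  | succ j ih =>
    rcases Nat.lt_or_ge i (j+1) with hlt | hge
    · exact ih (Nat.lt_succ_iff.mp hlt) h.1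
    · exact (Nat.le_antisymm hij hge) ▸ h

lemma crClass_anti {i j : ℕ} (hij : i ≤ j) (v : V) : crClass G j v ⊆ crClass G i v :=
  fun _ hz => crRel_mono hij hz

/-- persistence: a class existing at two times exists at all times in between. -/
lemma class_persist {s r t : ℕ} (hsr : s ≤ r) (hrt : r ≤ t) {X : Set V}
    (hs : X ∈ crPartition G s) (ht : X ∈ crPartition G t) : X ∈ crPartition G r := by
  obtain ⟨x, hx⟩ := partition_nonempty hs
  have h1 : crClass G r x ⊆ X := by
    rw [← crClass_eq_of_mem hs hx]; exact crClass_anti hsr x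
  have h2 : X ⊆ crClass G r x := by
    rw [← crClass_eq_of_mem ht hx]; exact crClass_anti hrt x
  have : crClass G r x = X := le_antisymm h1 h2
  rw [← this]; exact crClass_mem_partition r x

/-- a partition contained in another partition equals it. -/
lemma partition_eq_of_subset {i j : ℕ} (hss : crPartition G i ⊆ crPartition G j) :
    crPartition G i = crPartition G j := by
  refine Set.Subset.antisymm hss ?_
  rintro Y ⟨v, rfl⟩
  have h1 : crClass G i v ∈ crPartition G j := hss (crClass_mem_partition i v)
  have := class_eq_of_mem_mem h1 (crClass_mem_partition j v)
    (self_mem_crClass i v) (self_mem_crClass j v)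
  rw [← this]; exact crClass_mem_partition i v

lemma exists_lost {i j : ℕ} (hne : crPartition G i ≠ crPartition G j) :
    ∃ X ∈ crPartition G i, X ∉ crPartition G j := by
  by_contra hcon
  push_neg at hcon
  exact hne (partition_eq_of_subset hcon)

end CRaux

namespace CRaux

variable {G : SimpleGraph V}

section Counting

variable [Fintype V]
set_option linter.unusedSectionVars false

lemma P_finite (i : ℕ) : (crPartition G i).Finite := Set.toFinite _

lemma ncard_P_le (i : ℕ) : (crPartition G i).ncard ≤ Fintype.card V := by
  have himg : crPartition G i = crClass G i '' Set.univ := by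
    ext X
    constructor
    · rintro ⟨v, rfl⟩; exact ⟨v, trivial, rfl⟩
    · rintro ⟨v, -, rfl⟩; exact ⟨v, rfl⟩
  rw [himg]
  calc (crClass G i '' Set.univ).ncard ≤ (Set.univ : Set V).ncard :=
        Set.ncard_image_le Set.finite_univ
    _ = Fintype.card V := by rw [Set.ncard_univ, Nat.card_eq_fintype_card]

def parentMap (G : SimpleGraph V) (i : ℕ) (X : Set V) : Set V := {x | ∃ y ∈ X, crRel G i x y}

lemma parentMap_class (i : ℕ) (v : V) :
    parentMap G i (crClass G (i+1) v) = crClass G i v := by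
  ext z
  constructor
  · rintro ⟨y, hy, hz⟩
    exact crRel_trans hz (crRel_mono (Nat.le_succ i) hy)
  · intro hz
    exact ⟨v, self_mem_crClass (i+1) v, hz⟩

lemma P_eq_image_parent (i : ℕ) :
    crPartition G i = parentMap G i '' crPartition G (i+1) := by
  ext X
  constructor
  · rintro ⟨v, rfl⟩
    exact ⟨crClass G (i+1) v, crClass_mem_partition (i+1) v, parentMap_class i v⟩
  · rintro ⟨Y, ⟨v, rfl⟩, rfl⟩
    rw [parentMap_class]
    exact crClass_mem_partition i v

lemma parentMap_mem {i : ℕ} {X : Set V} (hX : X ∈ crPartition G (i+1)) :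
    parentMap G i X ∈ crPartition G i := by
  rw [P_eq_image_parent]
  exact ⟨X, hX, rfl⟩

lemma subset_parentMap {i : ℕ} {X : Set V} (hX : X ∈ crPartition G (i+1)) :
    X ⊆ parentMap G i X := by
  obtain ⟨v, rfl⟩ := hX
  rw [parentMap_class]
  exact crClass_anti (Nat.le_succ i) v

lemma ncard_mono_succ (i : ℕ) : (crPartition G i).ncard ≤ (crPartition G (i+1)).ncard := by
  rw [P_eq_image_parent (G := G) i]
  exact Set.ncard_image_le (P_finite _)

lemma P_succ_eq_of_ncard_le {i : ℕ}
    (hle : (crPartition G (i+1)).ncard ≤ (crPartition G i).ncard) :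
    crPartition G (i+1) = crPartition G i := by
  have hsurj : ∀ b ∈ crPartition G i, ∃ a, ∃ _ : a ∈ crPartition G (i+1),
      parentMap G i a = b := by
    intro b hb
    rw [P_eq_image_parent] at hb
    obtain ⟨a, ha, rfl⟩ := hb
    exact ⟨a, ha, rfl⟩
  have hinj : ∀ X ∈ crPartition G (i+1), ∀ Y ∈ crPartition G (i+1),
      parentMap G i X = parentMap G i Y → X = Y := by
    intro X hX Y hY hXY
    exact Set.inj_on_of_surj_on_of_ncard_le (f := fun a _ => parentMap G i a)
      (fun a ha => parentMap_mem ha) hsurj hle hX hY hXY (P_finite _)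
  have hfix : ∀ X ∈ crPartition G (i+1), parentMap G i X = X := by
    rintro X hX
    refine le_antisymm ?_ (subset_parentMap hX)
    intro x hx
    obtain ⟨v, rfl⟩ := hX
    rw [parentMap_class] at hx
    have h1 : crClass G (i+1) x ∈ crPartition G (i+1) := crClass_mem_partition _ x
    have h2 : parentMap G i (crClass G (i+1) x) = crClass G i v := by
      rw [parentMap_class]
      exact crClass_eq_of_rel hx
    have h3 : parentMap G i (crClass G (i+1) v) = crClass G i v := parentMap_class i v
    have := hinj _ h1 _ (crClass_mem_partition _ v) (h2.trans h3.symm)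
    rw [← this]
    exact self_mem_crClass (i+1) x
  ext X
  constructor
  · intro hX
    rw [← hfix X hX]
    exact parentMap_mem hX
  · intro hX
    obtain ⟨a, ha, rfl⟩ := hsurj X hX
    rw [hfix a ha]
    exact ha

lemma ncard_succ_of_ne {i : ℕ} (hne : crPartition G (i+1) ≠ crPartition G i) :
    (crPartition G i).ncard + 1 ≤ (crPartition G (i+1)).ncard := by
  by_contra hcon
  push_neg at hcon
  have hle : (crPartition G (i+1)).ncard ≤ (crPartition G i).ncard := by omega
  exact hne (P_succ_eq_of_ncard_le hle)

end Counting

section Stability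

lemma rel_iff_of_partition_eq {i : ℕ} (hpe : crPartition G (i+1) = crPartition G i)
    (u v : V) : crRel G (i+1) u v ↔ crRel G i u v := by
  constructor
  · exact crRel_mono_succ
  · intro hrel
    have h1 : crClass G (i+1) v ∈ crPartition G i := by
      rw [← hpe]; exact crClass_mem_partition _ v
    have h2 : crClass G (i+1) v = crClass G i v :=
      class_eq_of_mem_mem h1 (crClass_mem_partition i v)
        (self_mem_crClass (i+1) v) (self_mem_crClass i v)
    show u ∈ crClass G (i+1) v
    rw [h2]
    exact hrel

lemma partition_eq_succ {i : ℕ} (hpe : crPartition G (i+1) = crPartition G i) :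
    crPartition G (i+2) = crPartition G (i+1) := by
  have hcl : ∀ w : V, crClass G (i+1) w = crClass G i w := by
    intro w
    ext u
    exact rel_iff_of_partition_eq hpe u w
  have hrel2 : ∀ u v : V, crRel G (i+2) u v ↔ crRel G (i+1) u v := by
    intro u v
    constructor
    · exact crRel_mono_succ
    · intro hrel
      rw [crRel_succ_iff]
      refine ⟨hrel, fun w => ?_⟩
      rw [hcl w]
      exact (crRel_succ_iff.mp hrel).2 w
  have hcl2 : ∀ w : V, crClass G (i+2) w = crClass G (i+1) w := by
    intro w; ext u; exact hrel2 u w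
  ext X
  constructor
  · rintro ⟨v, rfl⟩; exact ⟨v, hcl2 v⟩
  · rintro ⟨v, rfl⟩; exact ⟨v, (hcl2 v).symm⟩

lemma partition_stable_chain {i : ℕ} (hpe : crPartition G (i+1) = crPartition G i) :
    ∀ d : ℕ, crPartition G (i+d) = crPartition G i := by
  intro d
  induction d with
  | zero => rfl
  | succ d ih =>
    have hstep : ∀ e : ℕ, crPartition G (i+e+1) = crPartition G (i+e) →
        crPartition G (i+e+2) = crPartition G (i+e+1) := fun e he => partition_eq_succ he
    -- prove by strong chaining: show P (i+d+1) = P (i+d)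
    have : ∀ e : ℕ, crPartition G (i+e+1) = crPartition G (i+e) := by
      intro e
      induction e with
      | zero => exact hpe
      | succ e ihe => exact hstep e ihe
    rw [show i + (d+1) = (i + d) + 1 by omega, this d, ih]

end Stability

end CRaux

namespace CRaux

variable {G : SimpleGraph V}

section LongRef

variable [Fintype V]
set_option linter.unusedSectionVars false

lemma crClass_zero (v : V) : crClass G 0 v = Set.univ := by
  ext u; simp [crClass, crRel]

lemma P_zero [Nonempty V] : crPartition G 0 = {Set.univ} := by
  ext X
  constructor
  · rintro ⟨v, rfl⟩; simp [crClass_zero]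
  · rintro rfl
    exact ⟨Classical.arbitrary V, (crClass_zero _).symm⟩

variable (hLR : IsLongRefinement G)
include hLR

lemma growth (i : ℕ) : ∀ d : ℕ, i + d ≤ Fintype.card V - 1 →
    (crPartition G i).ncard + d ≤ (crPartition G (i+d)).ncard := by
  intro d
  induction d with
  | zero => simp
  | succ d ih =>
    intro hle
    have h1 : i + d < Fintype.card V - 1 := by omega
    have hne := hLR.1 (i+d) h1
    have h2 := ncard_succ_of_ne hne
    have h3 := ih (by omega)
    have : i + (d+1) = (i + d) + 1 := by omega
    rw [this]
    omega

lemma ncard_P [Nonempty V] (i : ℕ) (hi : i ≤ Fintype.card V - 1) :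
    (crPartition G i).ncard = i + 1 := by
  have hn1 : 1 ≤ Fintype.card V := Fintype.card_pos
  have hlow := growth hLR 0 i (by omega)
  have hup := growth hLR i (Fintype.card V - 1 - i) (by omega)
  have h0 : (crPartition G 0).ncard = 1 := by rw [P_zero]; simp
  have hle := ncard_P_le (G := G) (Fintype.card V - 1)
  rw [h0] at hlow
  simp only [Nat.zero_add] at hlow
  have : i + (Fintype.card V - 1 - i) = Fintype.card V - 1 := by omega
  rw [this] at hup
  omega

lemma stable_from [Nonempty V] (k : ℕ) (hk : Fintype.card V - 1 ≤ k) :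
    crPartition G k = crPartition G (Fintype.card V - 1) := by
  have hn1 : 1 ≤ Fintype.card V := Fintype.card_pos
  have hbase : crPartition G ((Fintype.card V - 1) + 1) = crPartition G (Fintype.card V - 1) := by
    have : (Fintype.card V - 1) + 1 = Fintype.card V := by omega
    rw [this]; exact hLR.2
  have := partition_stable_chain hbase (k - (Fintype.card V - 1))
  rwa [show (Fintype.card V - 1) + (k - (Fintype.card V - 1)) = k by omega] at this

lemma split_le [Nonempty V] {t : ℕ} (ht : crPartition G (t+1) ≠ crPartition G t) :
    t + 1 ≤ Fintype.card V - 1 := by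
  by_contra hcon
  push_neg at hcon
  have h1 := stable_from hLR t (by omega)
  have h2 := stable_from hLR (t+1) (by omega)
  exact ht (h2.trans h1.symm)

end LongRef

section LostNew

variable [Fintype V]
set_option linter.unusedSectionVars false

lemma new_parent_lost {t : ℕ} {D : Set V} (hD : D ∈ crPartition G (t+1))
    (hD' : D ∉ crPartition G t) :
    parentMap G t D ∈ crPartition G t ∧ parentMap G t D ∉ crPartition G (t+1) ∧
      D ⊆ parentMap G t D := by
  refine ⟨parentMap_mem hD, ?_, subset_parentMap hD⟩
  intro hmem
  obtain ⟨x, hx⟩ := partition_nonempty hD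
  have hxp : x ∈ parentMap G t D := subset_parentMap hD hx
  have := class_eq_of_mem_mem hD hmem hx hxp
  rw [← this] at hmem
  exact hD' (by rw [this] at hmem ⊢; exact (class_eq_of_mem_mem hD ‹parentMap G t D ∈ crPartition G (t+1)› hx hxp) ▸ parentMap_mem hD)

lemma lost_new_card {t : ℕ}
    (hcard : (crPartition G (t+1)).ncard = (crPartition G t).ncard + 1) :
    (crPartition G t \ crPartition G (t+1)).ncard ≤ 1 ∧
    (crPartition G (t+1) \ crPartition G t).ncard ≤ 2 := by
  classical
  have hLfin : (crPartition G t \ crPartition G (t+1)).Finite := Set.toFinite _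
  have hNfin : (crPartition G (t+1) \ crPartition G t).Finite := Set.toFinite _
  have e1 := Set.ncard_inter_add_ncard_diff_eq_ncard (crPartition G t)
    (crPartition G (t+1)) (P_finite t)
  have e2 := Set.ncard_inter_add_ncard_diff_eq_ncard (crPartition G (t+1))
    (crPartition G t) (P_finite (t+1))
  have einter : (crPartition G t ∩ crPartition G (t+1)).ncard
      = (crPartition G (t+1) ∩ crPartition G t).ncard := by rw [Set.inter_comm]
  have hNL : (crPartition G (t+1) \ crPartition G t).ncard
      = (crPartition G t \ crPartition G (t+1)).ncard + 1 := by omega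
  have hchild : ∀ X ∈ crPartition G t \ crPartition G (t+1),
      ∃ c1 ∈ crPartition G (t+1) \ crPartition G t,
      ∃ c2 ∈ crPartition G (t+1) \ crPartition G t, c1 ≠ c2 ∧ c1 ⊆ X ∧ c2 ⊆ X := by
    rintro X ⟨hXt, hXt1⟩
    obtain ⟨x, hx⟩ := partition_nonempty hXt
    have hc1sub : crClass G (t+1) x ⊆ X := by
      rw [← crClass_eq_of_mem hXt hx]
      exact crClass_anti (Nat.le_succ t) x
    have hc1ne : crClass G (t+1) x ≠ X := by
      intro heq; exact hXt1 (heq ▸ crClass_mem_partition (t+1) x)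
    have hc1N : crClass G (t+1) x ∈ crPartition G (t+1) \ crPartition G t := by
      refine ⟨crClass_mem_partition (t+1) x, fun hmem => ?_⟩
      exact hc1ne (class_eq_of_mem_mem hmem hXt (self_mem_crClass (t+1) x) hx)
    obtain ⟨x', hx'X, hx'c1⟩ := Set.exists_of_ssubset (hc1sub.ssubset_of_ne hc1ne)
    have hc2sub : crClass G (t+1) x' ⊆ X := by
      rw [← crClass_eq_of_mem hXt hx'X]
      exact crClass_anti (Nat.le_succ t) x'
    have hc2ne : crClass G (t+1) x' ≠ X := by
      intro heq; exact hXt1 (heq ▸ crClass_mem_partition (t+1) x')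
    have hc2N : crClass G (t+1) x' ∈ crPartition G (t+1) \ crPartition G t := by
      refine ⟨crClass_mem_partition (t+1) x', fun hmem => ?_⟩
      exact hc2ne (class_eq_of_mem_mem hmem hXt (self_mem_crClass (t+1) x') hx'X)
    refine ⟨_, hc1N, _, hc2N, fun heq => hx'c1 ?_, hc1sub, hc2sub⟩
    rw [heq]; exact self_mem_crClass (t+1) x'
  have hcardL := Set.ncard_eq_toFinset_card _ hLfin
  have hcardN := Set.ncard_eq_toFinset_card _ hNfin
  have hbi : hNfin.toFinset
      = hLfin.toFinset.biUnion (fun X => hNfin.toFinset.filter (fun D => D ⊆ X)) := by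
    ext D
    simp only [Finset.mem_biUnion, Finset.mem_filter, Set.Finite.mem_toFinset]
    constructor
    · intro hD
      obtain ⟨hp1, hp2, hp3⟩ := new_parent_lost hD.1 hD.2
      exact ⟨parentMap G t D, ⟨hp1, hp2⟩, hD, hp3⟩
    · rintro ⟨X, hX, hD, -⟩; exact hD
  have hdisj : ∀ X ∈ hLfin.toFinset, ∀ Y ∈ hLfin.toFinset, X ≠ Y →
      Disjoint (hNfin.toFinset.filter (fun D => D ⊆ X))
        (hNfin.toFinset.filter (fun D => D ⊆ Y)) := by
    intro X hX Y hY hXY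
    refine Finset.disjoint_left.mpr ?_
    intro D hDX hDY
    simp only [Finset.mem_filter, Set.Finite.mem_toFinset] at hDX hDY
    obtain ⟨⟨hDmem, -⟩, hDsubX⟩ := hDX
    obtain ⟨-, hDsubY⟩ := hDY
    obtain ⟨d, hd⟩ := partition_nonempty hDmem
    rw [Set.Finite.mem_toFinset] at hX hY
    exact hXY (class_eq_of_mem_mem hX.1 hY.1 (hDsubX hd) (hDsubY hd))
  have hsum : hNfin.toFinset.card
      = ∑ X ∈ hLfin.toFinset, (hNfin.toFinset.filter (fun D => D ⊆ X)).card := by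
    conv_lhs => rw [hbi]
    exact Finset.card_biUnion hdisj
  have hfib2 : ∀ X ∈ hLfin.toFinset, 2 ≤ (hNfin.toFinset.filter (fun D => D ⊆ X)).card := by
    intro X hX
    rw [Set.Finite.mem_toFinset] at hX
    obtain ⟨c1, hc1, c2, hc2, hne, hs1, hs2⟩ := hchild X hX
    refine Finset.one_lt_card.mpr ⟨c1, ?_, c2, ?_, hne⟩ <;>
      simp only [Finset.mem_filter, Set.Finite.mem_toFinset]
    · exact ⟨hc1, hs1⟩
    · exact ⟨hc2, hs2⟩
  have hge : hLfin.toFinset.card * 2 ≤ hNfin.toFinset.card := by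
    rw [hsum]
    calc hLfin.toFinset.card * 2 = hLfin.toFinset.card • 2 := by rw [smul_eq_mul]
      _ ≤ _ := Finset.card_nsmul_le_sum _ _ _ hfib2
  omega

end LostNew


section Cnt
set_option linter.unusedSectionVars false

lemma cnt_singleton_eq_one {u c : V} (h : G.Adj u c) : cnt G u {c} = 1 := by
  rw [cnt]
  have : {x | G.Adj u x ∧ x ∈ ({c} : Set V)} = {c} := by
    ext z
    constructor
    · rintro ⟨-, hz⟩; exact hz
    · rintro rfl; exact ⟨h, rfl⟩
  rw [this, Set.ncard_singleton]

lemma cnt_singleton_eq_zero {u c : V} (h : ¬ G.Adj u c) : cnt G u {c} = 0 := by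
  rw [cnt]
  have : {x | G.Adj u x ∧ x ∈ ({c} : Set V)} = ∅ := by
    ext z
    simp only [Set.mem_setOf_eq, Set.mem_singleton_iff, Set.mem_empty_iff_false, iff_false]
    rintro ⟨hadj, rfl⟩; exact h hadj
  rw [this, Set.ncard_empty]

lemma cnt_union [Fintype V] (u : V) {S T : Set V} (hdisj : Disjoint S T) :
    cnt G u (S ∪ T) = cnt G u S + cnt G u T := by
  rw [cnt, cnt, cnt]
  have hset : {x | G.Adj u x ∧ x ∈ S ∪ T}
      = {x | G.Adj u x ∧ x ∈ S} ∪ {x | G.Adj u x ∧ x ∈ T} := by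
    ext z
    simp only [Set.mem_setOf_eq, Set.mem_union]
    tauto
  have hd2 : Disjoint {x | G.Adj u x ∧ x ∈ S} {x | G.Adj u x ∧ x ∈ T} := by
    rw [Set.disjoint_left]
    rintro z ⟨-, hzS⟩ ⟨-, hzT⟩
    exact Set.disjoint_left.mp hdisj hzS hzT
  rw [hset, Set.ncard_union_eq hd2]

lemma cnt_pair [Fintype V] (u : V) {c d : V} (hcd : c ≠ d) :
    cnt G u {c, d} = cnt G u {c} + cnt G u {d} := by
  have : ({c, d} : Set V) = {c} ∪ {d} := rfl
  rw [this, cnt_union u (by simp [hcd])]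

lemma cnt_singleton_comm (u c : V) : cnt G u {c} = cnt G c {u} := by
  by_cases h : G.Adj u c
  · rw [cnt_singleton_eq_one h, cnt_singleton_eq_one h.symm]
  · rw [cnt_singleton_eq_zero h, cnt_singleton_eq_zero (fun h' => h h'.symm)]

lemma cnt_pair_swap [Fintype V] {v1 v2 r1 r2 : V} (h12 : v1 ≠ v2) (hr : r1 ≠ r2) :
    cnt G v1 {r1, r2} + cnt G v2 {r1, r2} = cnt G r1 {v1, v2} + cnt G r2 {v1, v2} := by
  rw [cnt_pair _ hr, cnt_pair _ hr, cnt_pair _ h12, cnt_pair _ h12,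
    cnt_singleton_comm v1 r1, cnt_singleton_comm v1 r2,
    cnt_singleton_comm v2 r1, cnt_singleton_comm v2 r2]
  omega

lemma balance {t : ℕ} {u u' : V} (hrel : crRel G (t+1) u u') {W : Set V}
    (hW : W ∈ crPartition G t) : cnt G u W = cnt G u' W := by
  obtain ⟨w, rfl⟩ := hW
  exact (crRel_succ_iff.mp hrel).2 w

lemma split_witness {s : ℕ} {u u' : V} (hrel : crRel G (s+1) u u')
    (hnrel : ¬ crRel G (s+2) u u') :
    ∃ W ∈ crPartition G (s+1), W ∉ crPartition G s ∧ cnt G u W ≠ cnt G u' W := by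
  rw [crRel_succ_iff (i := s+1)] at hnrel
  push_neg at hnrel
  obtain ⟨w, hw⟩ := hnrel hrel
  refine ⟨crClass G (s+1) w, crClass_mem_partition _ w, ?_, hw⟩
  intro hmem
  have heq : crClass G (s+1) w = crClass G s w :=
    class_eq_of_mem_mem hmem (crClass_mem_partition s w)
      (self_mem_crClass (s+1) w) (self_mem_crClass s w)
  have hbal : cnt G u (crClass G s w) = cnt G u' (crClass G s w) :=
    (crRel_succ_iff.mp hrel).2 w
  rw [heq] at hw
  exact hw hbal

lemma class_pair_of_split [Fintype V] {t : ℕ} {X : Set V} (hX : X ∈ crPartition G t)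
    (hX' : X ∉ crPartition G (t+1)) (hsmall : X.ncard ≤ 2) :
    ∃ x y : V, x ≠ y ∧ X = {x, y} := by
  obtain ⟨x, hx⟩ := partition_nonempty hX
  have hsub : crClass G (t+1) x ⊆ X := by
    rw [← crClass_eq_of_mem hX hx]
    exact crClass_anti (Nat.le_succ t) x
  have hne : crClass G (t+1) x ≠ X := by
    intro heq; exact hX' (heq ▸ crClass_mem_partition (t+1) x)
  obtain ⟨y, hyX, hyc⟩ := Set.exists_of_ssubset (hsub.ssubset_of_ne hne)
  have hxy : x ≠ y := by
    rintro rfl; exact hyc (self_mem_crClass (t+1) x)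
  refine ⟨x, y, hxy, ?_⟩
  have hsub2 : ({x, y} : Set V) ⊆ X := by
    rintro z hz
    rcases hz with rfl | rfl
    · exact hx
    · exact hyX
  have := Set.eq_of_subset_of_ncard_le hsub2 (by rw [Set.ncard_pair hxy]; exact hsmall)
    (Set.toFinite X)
  exact this.symm

lemma child_singleton {t : ℕ} {X : Set V} (hX : X ∈ crPartition G t)
    (hX' : X ∉ crPartition G (t+1)) {x y : V} (hne : x ≠ y) (hxy : X = {x, y}) :
    crClass G (t+1) x = {x} := by
  have hx : x ∈ X := by rw [hxy]; exact Set.mem_insert _ _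
  have hsub : crClass G (t+1) x ⊆ X := by
    rw [← crClass_eq_of_mem hX hx]
    exact crClass_anti (Nat.le_succ t) x
  have hynot : y ∉ crClass G (t+1) x := by
    intro hy
    apply hX'
    have hXsub : X ⊆ crClass G (t+1) x := by
      rw [hxy]
      rintro z hz
      rcases hz with rfl | rfl
      · exact self_mem_crClass (t+1) z
      · exact hy
    rw [← le_antisymm hsub hXsub]
    exact crClass_mem_partition (t+1) x
  ext z
  constructor
  · intro hz
    have hzX : z ∈ X := hsub hz
    rw [hxy] at hzX
    rcases hzX with rfl | rfl
    · rfl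
    · exact absurd hz hynot
  · rintro rfl
    exact self_mem_crClass (t+1) z

lemma not_rel_of_pair_split {t : ℕ} {X : Set V} (hX : X ∈ crPartition G t)
    (hX' : X ∉ crPartition G (t+1)) {x y : V} (hne : x ≠ y) (hxy : X = {x, y}) :
    ¬ crRel G (t+1) x y := by
  intro hrel
  have hcs := child_singleton hX hX' hne hxy
  have hy : y ∈ crClass G (t+1) x := crRel_symm hrel
  rw [hcs] at hy
  exact hne hy.symm

lemma matched2 [Fintype V] {s t c d : V} (hst : s ≠ t) (hcd : c ≠ d)
    (hbal : cnt G s {c, d} = cnt G t {c, d}) (hunb : cnt G s {c} ≠ cnt G t {c}) :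
    ∃ u u', ({s, t} : Set V) = {u, u'} ∧ u ≠ u' ∧
      G.Adj u c ∧ G.Adj u' d ∧ ¬G.Adj u d ∧ ¬G.Adj u' c := by
  rw [cnt_pair _ hcd, cnt_pair _ hcd] at hbal
  by_cases hsc : G.Adj s c <;> by_cases hsd : G.Adj s d <;>
    by_cases htc : G.Adj t c <;> by_cases htd : G.Adj t d <;>
    simp only [cnt_singleton_eq_one, cnt_singleton_eq_zero, hsc, hsd, htc, htd,
      not_false_iff] at hbal hunb
  all_goals first
    | omega
    | exact ⟨s, t, rfl, hst, hsc, htd, hsd, htc⟩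
    | exact ⟨t, s, Set.pair_comm s t, hst.symm, htc, hsd, htd, hsc⟩

lemma split_witness2 {s : ℕ} {u u' : V} (hrel : crRel G (s+1) u u')
    (hnrel : ¬ crRel G (s+2) u u') :
    ∃ w : V, crClass G (s+1) w ∉ crPartition G s ∧
      cnt G u (crClass G (s+1) w) ≠ cnt G u' (crClass G (s+1) w) := by
  rw [crRel_succ_iff (i := s+1)] at hnrel
  push_neg at hnrel
  obtain ⟨w, hw⟩ := hnrel hrel
  refine ⟨w, ?_, hw⟩
  intro hmem
  have heq : crClass G (s+1) w = crClass G s w :=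
    class_eq_of_mem_mem hmem (crClass_mem_partition s w)
      (self_mem_crClass (s+1) w) (self_mem_crClass s w)
  have hbal : cnt G u (crClass G s w) = cnt G u' (crClass G s w) :=
    (crRel_succ_iff.mp hrel).2 w
  rw [heq] at hw
  exact hw hbal

lemma adj_of_cnt_singleton {u c : V} (h : cnt G u {c} ≠ 0) : G.Adj u c := by
  by_contra hadj
  exact h (cnt_singleton_eq_zero hadj)

lemma not_adj_of_cnt_singleton {u c : V} (h : cnt G u {c} = 0) : ¬ G.Adj u c := by
  intro hadj
  rw [cnt_singleton_eq_one hadj] at h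
  omega

end Cnt


end CRaux

open CRaux in
/-- If the pairs `A = P_a` and `B = P_b` (with `1 < a < b`) result from the split
of `C_{p-1}`, then `b = a + 1` or `b = a + 2`. -/
theorem split_pairs_close [Fintype V] (G : SimpleGraph V)
    (h : IsLongRefinement G) (p : ℕ) (hp1 : 1 ≤ p)
    (hp : ∀ C ∈ crPartition G p, C.ncard ≤ 2)
    (hpmin : ∀ q < p, ∃ C ∈ crPartition G q, 2 < C.ncard)
    (C A B : Set V)
    (hC : C ∈ crPartition G (p-1)) (hC' : C ∉ crPartition G p)
    (hA : A ∈ crPartition G p) (hA' : A ∉ crPartition G (p-1))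
    (hB : B ∈ crPartition G p) (hB' : B ∉ crPartition G (p-1))
    (hAB : A ≠ B) (hCAB : C = A ∪ B)
    (a b : ℕ) (ha : 1 < a) (hab : a < b)
    (hAa : A ∈ crPartition G (p + a - 1)) (hAa' : A ∉ crPartition G (p + a))
    (hBb : B ∈ crPartition G (p + b - 1)) (hBb' : B ∉ crPartition G (p + b)) :
    b = a + 1 ∨ b = a + 2 := by
  classical
  by_contra hcon
  push_neg at hcon
  have hb3 : a + 3 ≤ b := by omega
  haveI hVne : Nonempty V := by
    obtain ⟨v, -⟩ := hA
    exact ⟨v⟩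
  have hn1 : 1 ≤ Fintype.card V := Fintype.card_pos
  -- B splits at p+b, so p+b ≤ n-1
  have hpbn : p + b ≤ Fintype.card V - 1 := by
    by_contra hcon2
    push_neg at hcon2
    have h1 : crPartition G (p+b) = crPartition G (Fintype.card V - 1) :=
      stable_from h _ (by omega)
    have h2 : crPartition G (p+b-1) = crPartition G (Fintype.card V - 1) :=
      stable_from h _ (by omega)
    rw [← h2] at h1
    exact hBb' (h1 ▸ hBb)
  -- splitting structure at each step
  have hsplit : ∀ t : ℕ, t + 1 ≤ Fintype.card V - 1 →
      (crPartition G t \ crPartition G (t+1)).ncard ≤ 1 ∧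
      (crPartition G (t+1) \ crPartition G t).ncard ≤ 2 := by
    intro t ht
    apply lost_new_card
    rw [ncard_P h (t+1) ht, ncard_P h t (by omega)]
  -- class sizes from p on
  have hsize : ∀ t, p ≤ t → ∀ X ∈ crPartition G t, X.ncard ≤ 2 := by
    intro t ht X hX
    obtain ⟨x, hx⟩ := partition_nonempty hX
    have h1 : X = crClass G t x := (crClass_eq_of_mem hX hx).symm
    have h2 : crClass G t x ⊆ crClass G p x := crClass_anti ht x
    have h3 : (crClass G t x).ncard ≤ (crClass G p x).ncard :=
      Set.ncard_le_ncard h2 (Set.toFinite _)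
    have h4 := hp _ (crClass_mem_partition p x)
    rw [h1]; omega
  have hdead : ∀ s t : ℕ, s + 1 ≤ t → ∀ X : Set V, X ∉ crPartition G (s+1) →
      X ∈ crPartition G s → X ∈ crPartition G t → False := by
    intro s t hst X h2 h1 h3
    exact h2 (class_persist (Nat.le_succ s) hst h1 h3)
  have hpair_in_Pp : ∀ (t : ℕ), p ≤ t → ∀ X ∈ crPartition G t, X.ncard = 2 →
      X ∈ crPartition G p := by
    intro t ht X hX h2
    obtain ⟨x, hx⟩ := partition_nonempty hX
    have hXc : X = crClass G t x := (crClass_eq_of_mem hX hx).symm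
    have hsub : X ⊆ crClass G p x := by rw [hXc]; exact crClass_anti ht x
    have h1 : (crClass G p x).ncard ≤ 2 := hp _ (crClass_mem_partition p x)
    have heq := Set.eq_of_subset_of_ncard_le hsub (by omega) (Set.toFinite _)
    rw [heq]; exact crClass_mem_partition p x
  have hABdisj : Disjoint A B := by
    rw [Set.disjoint_left]
    intro z hzA hzB
    exact hAB (class_eq_of_mem_mem hA hB hzA hzB)
  -- index bookkeeping
  obtain ⟨α, hα⟩ : ∃ x, p + a = x + 1 := ⟨p + a - 1, by omega⟩
  obtain ⟨α', hα'⟩ : ∃ x, α = x + 1 := ⟨α - 1, by omega⟩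
  obtain ⟨β, hβ⟩ : ∃ x, p + b = x + 1 := ⟨p + b - 1, by omega⟩
  obtain ⟨β', hβ'⟩ : ∃ x, β = x + 1 := ⟨β - 1, by omega⟩
  have hAα : A ∈ crPartition G α := by
    have he : p + a - 1 = α := by omega
    rwa [he] at hAa
  have hAα1 : A ∉ crPartition G (α + 1) := by rwa [hα] at hAa'
  have hBβ : B ∈ crPartition G β := by
    have he : p + b - 1 = β := by omega
    rwa [he] at hBb
  have hBβ1 : B ∉ crPartition G (β + 1) := by rwa [hβ] at hBb'
  have hBpersist : ∀ r, p ≤ r → r ≤ β → B ∈ crPartition G r := fun r h1 h2 =>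
    class_persist h1 h2 hB hBβ
  ------------------------------------------------------------------
  -- A-split analysis: witness pair R = crClass G α' w = {w, y}
  ------------------------------------------------------------------
  obtain ⟨u1', u2', hu'ne, hAeq'⟩ := class_pair_of_split hAα hAα1 (hsize α (by omega) A hAα)
  have hu1'A : u1' ∈ A := by rw [hAeq']; exact Set.mem_insert _ _
  have hu2'A : u2' ∈ A := by rw [hAeq']; exact Set.mem_insert_of_mem _ rfl
  have hurel : crRel G α u1' u2' := rel_of_mem_same hAα hu1'A hu2'A
  have hunrel : ¬ crRel G (α+1) u1' u2' := not_rel_of_pair_split hAα hAα1 hu'ne hAeq'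
  have hurel2 : crRel G (α' + 1) u1' u2' := by rw [← hα']; exact hurel
  have hunrel2 : ¬ crRel G (α' + 2) u1' u2' := by
    rw [show α' + 2 = α + 1 by omega]; exact hunrel
  obtain ⟨w, hWnew, hWunb⟩ := split_witness2 (s := α') hurel2 hunrel2
  have hWmem : crClass G (α'+1) w ∈ crPartition G (α'+1) := crClass_mem_partition _ w
  have hRmem : crClass G α' w ∈ crPartition G α' := crClass_mem_partition _ w
  have hWsubR : crClass G (α'+1) w ⊆ crClass G α' w := crClass_anti (Nat.le_succ α') w
  have hWneR : crClass G (α'+1) w ≠ crClass G α' w := fun heq => hWnew (heq ▸ hRmem)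
  obtain ⟨y, hyR, hyW⟩ := Set.exists_of_ssubset (hWsubR.ssubset_of_ne hWneR)
  have hwy : w ≠ y := by rintro rfl; exact hyW (self_mem_crClass _ w)
  have hRsize : (crClass G α' w).ncard ≤ 2 := hsize α' (by omega) _ hRmem
  have hReq : crClass G α' w = {w, y} := by
    have hsub2 : ({w, y} : Set V) ⊆ crClass G α' w := by
      rintro z hz
      rcases hz with rfl | rfl
      · exact self_mem_crClass _ z
      · exact hyR
    exact (Set.eq_of_subset_of_ncard_le hsub2
      (by rw [Set.ncard_pair hwy]; exact hRsize) (Set.toFinite _)).symm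
  have hRdead : crClass G α' w ∉ crPartition G (α'+1) := by
    intro hmem
    exact hWneR (class_eq_of_mem_mem hWmem hmem (self_mem_crClass _ w)
      (hWsubR (self_mem_crClass _ w)))
  have hWx : crClass G (α'+1) w = {w} := child_singleton hRmem hRdead hwy hReq
  have hyclass : crClass G (α'+1) y = {y} :=
    child_singleton hRmem hRdead hwy.symm (by rw [hReq, Set.pair_comm])
  have hwmem : ({w} : Set V) ∈ crPartition G (α'+1) := hWx ▸ hWmem
  have hymem : ({y} : Set V) ∈ crPartition G (α'+1) := hyclass ▸ crClass_mem_partition _ y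
  have hRP : crClass G α' w ∈ crPartition G p :=
    hpair_in_Pp α' (by omega) _ hRmem (by rw [hReq, Set.ncard_pair hwy])
  have hRneA : crClass G α' w ≠ A := fun heq => hRdead (by rw [heq, ← hα']; exact hAα)
  have hRneB : crClass G α' w ≠ B := fun heq =>
    hRdead (by rw [heq]; exact hBpersist (α'+1) (by omega) (by omega))
  ------------------------------------------------------------------
  -- N1 : classes of π^p other than A,B are classes of π^(p-1)
  ------------------------------------------------------------------
  have hN1 : ∀ D, D ∈ crPartition G p → D ≠ A → D ≠ B → D ∈ crPartition G (p-1) := by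
    intro D hD hDA hDB
    by_contra hDnot
    obtain ⟨p', hp'⟩ : ∃ x, p = x + 1 := ⟨p - 1, by omega⟩
    have hnew2 : (crPartition G (p'+1) \ crPartition G p').ncard ≤ 2 :=
      (hsplit p' (by omega)).2
    have hep : p' = p - 1 := by omega
    have hmems : ({A, B, D} : Set (Set V)) ⊆ crPartition G (p'+1) \ crPartition G p' := by
      rintro X hX
      rcases hX with rfl | rfl | rfl
      · exact ⟨by rw [← hp']; exact hA, by rw [hep]; exact hA'⟩
      · exact ⟨by rw [← hp']; exact hB, by rw [hep]; exact hB'⟩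
      · exact ⟨by rw [← hp']; exact hD, by rw [hep]; exact hDnot⟩
    have h3 : ({A, B, D} : Set (Set V)).ncard = 3 := by
      rw [Set.ncard_insert_of_notMem (by simp [hAB, Ne.symm hDA]) (Set.toFinite _),
        Set.ncard_pair (Ne.symm hDB)]
    have hle3 := Set.ncard_le_ncard hmems (Set.toFinite _)
    omega
  have hRp1 : crClass G α' w ∈ crPartition G (p-1) := hN1 _ hRP hRneA hRneB
  -- p ≥ 2
  have hp2 : 2 ≤ p := by
    by_contra hcon2
    have hz : p - 1 = 0 := by omega
    have hmem0 : crClass G α' w ∈ crPartition G 0 := by rw [← hz]; exact hRp1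
    rw [P_zero] at hmem0
    have huniv : crClass G α' w = Set.univ := hmem0
    have h2 : (crClass G α' w).ncard = 2 := by rw [hReq, Set.ncard_pair hwy]
    rw [huniv, Set.ncard_univ, Nat.card_eq_fintype_card] at h2
    omega
  obtain ⟨p2, hp2'⟩ : ∃ x, p - 1 = x + 1 := ⟨p - 2, by omega⟩
  -- twin property of C's vertices
  have htwin : ∀ z z', z ∈ C → z' ∈ C → ∀ W ∈ crPartition G p2,
      cnt G z W = cnt G z' W := by
    intro z z' hz hz' W hW
    have hrel : crRel G (p-1) z z' := rel_of_mem_same hC hz hz'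
    rw [hp2'] at hrel
    exact balance hrel hW
  ------------------------------------------------------------------
  -- matched structure A - R
  ------------------------------------------------------------------
  have hbalAR : cnt G u1' (crClass G α' w) = cnt G u2' (crClass G α' w) :=
    balance (t := α') (by rw [← hα']; exact hurel) hRmem
  obtain ⟨u1, u2, hApair, hu12, hu1w, hu2y, hu1y, hu2w⟩ :=
    matched2 hu'ne hwy (by rw [← hReq]; exact hbalAR) (by rw [← hWx]; exact hWunb)
  have hAeq : A = {u1, u2} := hAeq'.trans hApair
  have hu1A : u1 ∈ A := by rw [hAeq]; exact Set.mem_insert _ _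
  have hu2A : u2 ∈ A := by rw [hAeq]; exact Set.mem_insert_of_mem _ rfl
  have hu1C : u1 ∈ C := by rw [hCAB]; exact Or.inl hu1A
  have hu2C : u2 ∈ C := by rw [hCAB]; exact Or.inl hu2A
  have hcntu1R : cnt G u1 (crClass G α' w) = 1 := by
    rw [hReq, cnt_pair _ hwy, cnt_singleton_eq_one hu1w, cnt_singleton_eq_zero hu1y]
  have hcntwA : cnt G w A = 1 := by
    rw [hAeq, cnt_pair _ hu12, cnt_singleton_eq_one hu1w.symm,
      cnt_singleton_eq_zero (fun h2 => hu2w h2.symm)]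
  have hcntyA : cnt G y A = 1 := by
    rw [hAeq, cnt_pair _ hu12, cnt_singleton_eq_zero (fun h2 => hu1y h2.symm),
      cnt_singleton_eq_one hu2y.symm]
  ------------------------------------------------------------------
  -- B-split analysis: witness pair R' = crClass G β' w2 = {w2, y2}
  ------------------------------------------------------------------
  obtain ⟨v1', v2', hv'ne, hBeq'⟩ := class_pair_of_split hBβ hBβ1 (hsize β (by omega) B hBβ)
  have hv1'B : v1' ∈ B := by rw [hBeq']; exact Set.mem_insert _ _
  have hv2'B : v2' ∈ B := by rw [hBeq']; exact Set.mem_insert_of_mem _ rfl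
  have hvrel : crRel G β v1' v2' := rel_of_mem_same hBβ hv1'B hv2'B
  have hvnrel : ¬ crRel G (β+1) v1' v2' := not_rel_of_pair_split hBβ hBβ1 hv'ne hBeq'
  have hvrel2 : crRel G (β' + 1) v1' v2' := by rw [← hβ']; exact hvrel
  have hvnrel2 : ¬ crRel G (β' + 2) v1' v2' := by
    rw [show β' + 2 = β + 1 by omega]; exact hvnrel
  obtain ⟨w2, hW2new, hW2unb⟩ := split_witness2 (s := β') hvrel2 hvnrel2
  have hW2mem : crClass G (β'+1) w2 ∈ crPartition G (β'+1) := crClass_mem_partition _ w2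
  have hR'mem : crClass G β' w2 ∈ crPartition G β' := crClass_mem_partition _ w2
  have hW2subR : crClass G (β'+1) w2 ⊆ crClass G β' w2 := crClass_anti (Nat.le_succ β') w2
  have hW2neR : crClass G (β'+1) w2 ≠ crClass G β' w2 := fun heq => hW2new (heq ▸ hR'mem)
  obtain ⟨y2, hy2R, hy2W⟩ := Set.exists_of_ssubset (hW2subR.ssubset_of_ne hW2neR)
  have hw2y2 : w2 ≠ y2 := by rintro rfl; exact hy2W (self_mem_crClass _ w2)
  have hR'size : (crClass G β' w2).ncard ≤ 2 := hsize β' (by omega) _ hR'mem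
  have hR'eq : crClass G β' w2 = {w2, y2} := by
    have hsub2 : ({w2, y2} : Set V) ⊆ crClass G β' w2 := by
      rintro z hz
      rcases hz with rfl | rfl
      · exact self_mem_crClass _ z
      · exact hy2R
    exact (Set.eq_of_subset_of_ncard_le hsub2
      (by rw [Set.ncard_pair hw2y2]; exact hR'size) (Set.toFinite _)).symm
  have hR'dead : crClass G β' w2 ∉ crPartition G (β'+1) := by
    intro hmem
    exact hW2neR (class_eq_of_mem_mem hW2mem hmem (self_mem_crClass _ w2)
      (hW2subR (self_mem_crClass _ w2)))
  have hW2x : crClass G (β'+1) w2 = {w2} := child_singleton hR'mem hR'dead hw2y2 hR'eq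
  have hR'P : crClass G β' w2 ∈ crPartition G p :=
    hpair_in_Pp β' (by omega) _ hR'mem (by rw [hR'eq, Set.ncard_pair hw2y2])
  have hR'neB : crClass G β' w2 ≠ B := fun heq =>
    hR'dead (by rw [heq, ← hβ']; exact hBβ)
  have hR'neA : crClass G β' w2 ≠ A := by
    intro heq
    exact hdead α β' (by omega) A hAα1 hAα (by rw [← heq]; exact hR'mem)
  have hR'p1 : crClass G β' w2 ∈ crPartition G (p-1) := hN1 _ hR'P hR'neA hR'neB
  have hbalBR' : cnt G v1' (crClass G β' w2) = cnt G v2' (crClass G β' w2) :=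
    balance (t := β') (by rw [← hβ']; exact hvrel) hR'mem
  obtain ⟨v1, v2, hBpair, hv12, hv1w2, hv2y2, hv1y2, hv2w2⟩ :=
    matched2 hv'ne hw2y2 (by rw [← hR'eq]; exact hbalBR') (by rw [← hW2x]; exact hW2unb)
  have hBeq : B = {v1, v2} := hBeq'.trans hBpair
  have hv1B : v1 ∈ B := by rw [hBeq]; exact Set.mem_insert _ _
  have hv2B : v2 ∈ B := by rw [hBeq]; exact Set.mem_insert_of_mem _ rfl
  have hv1C : v1 ∈ C := by rw [hCAB]; exact Or.inr hv1B
  have hv2C : v2 ∈ C := by rw [hCAB]; exact Or.inr hv2B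
  have hcntv1R' : cnt G v1 (crClass G β' w2) = 1 := by
    rw [hR'eq, cnt_pair _ hw2y2, cnt_singleton_eq_one hv1w2, cnt_singleton_eq_zero hv1y2]
  ------------------------------------------------------------------
  -- T : the class splitting at p+a+1 = α+2
  ------------------------------------------------------------------
  obtain ⟨T, hTmem, hTdead⟩ : ∃ T', T' ∈ crPartition G (α+1) ∧
      T' ∉ crPartition G (α+1+1) := by
    have hne := h.1 (α+1) (by omega)
    obtain ⟨X, hX1, hX2⟩ := exists_lost (Ne.symm hne)
    exact ⟨X, hX1, hX2⟩
  obtain ⟨r1', r2', hr'ne, hTeq'⟩ :=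
    class_pair_of_split hTmem hTdead (hsize (α+1) (by omega) T hTmem)
  have hr1'T : r1' ∈ T := by rw [hTeq']; exact Set.mem_insert _ _
  have hr2'T : r2' ∈ T := by rw [hTeq']; exact Set.mem_insert_of_mem _ rfl
  have hrrel : crRel G (α+1) r1' r2' := rel_of_mem_same hTmem hr1'T hr2'T
  have hrnrel : ¬ crRel G (α+1+1) r1' r2' := not_rel_of_pair_split hTmem hTdead hr'ne hTeq'
  obtain ⟨z, hZnew, hZunb⟩ := split_witness2 (s := α) hrrel hrnrel
  have hZmem : crClass G (α+1) z ∈ crPartition G (α+1) := crClass_mem_partition _ z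
  have hZpmem : crClass G α z ∈ crPartition G α := crClass_mem_partition _ z
  have hZsub : crClass G (α+1) z ⊆ crClass G α z := crClass_anti (Nat.le_succ α) z
  have hZne : crClass G (α+1) z ≠ crClass G α z := fun heq => hZnew (heq ▸ hZpmem)
  have hZpdead : crClass G α z ∉ crPartition G (α+1) := by
    intro hmem
    exact hZne (class_eq_of_mem_mem hZmem hmem (self_mem_crClass _ z)
      (hZsub (self_mem_crClass _ z)))
  have hlost1 := (hsplit α (by omega)).1
  have hZpA : crClass G α z = A := by
    have h1 : crClass G α z ∈ crPartition G α \ crPartition G (α+1) := ⟨hZpmem, hZpdead⟩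
    have h2 : A ∈ crPartition G α \ crPartition G (α+1) := ⟨hAα, hAα1⟩
    exact (Set.ncard_le_one (Set.toFinite _)).mp hlost1 _ h1 _ h2
  have hzA : z ∈ A := by
    have := self_mem_crClass (G := G) α z
    rwa [hZpA] at this
  have hzcases : z = u1 ∨ z = u2 := by
    rw [hAeq] at hzA
    exact hzA
  have hbalTA : cnt G r1' A = cnt G r2' A := balance (t := α) hrrel hAα
  have hTfacts : ∃ r1 r2 : V, T = {r1, r2} ∧ r1 ≠ r2 ∧ G.Adj r1 u1 ∧ G.Adj r2 u2 ∧
      ¬G.Adj r1 u2 ∧ ¬G.Adj r2 u1 := by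
    rcases hzcases with rfl | rfl
    · have hZx : crClass G (α+1) z = {z} := child_singleton hAα hAα1 hu12 hAeq
      obtain ⟨r1, r2, hTp, h12, ha1, ha2, ha3, ha4⟩ :=
        matched2 hr'ne hu12 (by rw [← hAeq]; exact hbalTA) (by rw [← hZx]; exact hZunb)
      exact ⟨r1, r2, hTeq'.trans hTp, h12, ha1, ha2, ha3, ha4⟩
    · have hZx : crClass G (α+1) z = {z} :=
        child_singleton hAα hAα1 hu12.symm (by rw [hAeq, Set.pair_comm])
      obtain ⟨r1, r2, hTp, h12, ha1, ha2, ha3, ha4⟩ :=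
        matched2 hr'ne hu12.symm
          (by rw [show ({z, u1} : Set V) = A by rw [hAeq, Set.pair_comm]]; exact hbalTA)
          (by rw [← hZx]; exact hZunb)
      exact ⟨r2, r1, (hTeq'.trans hTp).trans (Set.pair_comm _ _), h12.symm,
        ha2, ha1, ha4, ha3⟩
  obtain ⟨r1, r2, hTeq, hr12, hr1u1, hr2u2, hr1u2, hr2u1⟩ := hTfacts
  have hTneA : T ≠ A := fun heq => hAα1 (by rw [← heq]; exact hTmem)
  have hTneB : T ≠ B := by
    intro heq
    exact hTdead (by rw [heq]; exact hBpersist (α+1+1) (by omega) (by omega))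
  have hTP : T ∈ crPartition G p :=
    hpair_in_Pp (α+1) (by omega) _ hTmem (by rw [hTeq, Set.ncard_pair hr12])
  have hTp1 : T ∈ crPartition G (p-1) := hN1 T hTP hTneA hTneB
  ------------------------------------------------------------------
  -- Dichotomy 1 : R is new at p-1
  ------------------------------------------------------------------
  have hRnew : crClass G α' w ∉ crPartition G p2 := by
    intro hRold
    have ht1 : cnt G v1 (crClass G α' w) = 1 := by
      rw [htwin v1 u1 hv1C hu1C _ hRold]; exact hcntu1R
    have ht2 : cnt G v2 (crClass G α' w) = 1 := by
      rw [htwin v2 u1 hv2C hu1C _ hRold]; exact hcntu1R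
    have hvBrel : crRel G (α+1) v1 v2 :=
      rel_of_mem_same (hBpersist (α+1) (by omega) (by omega)) hv1B hv2B
    have hbw : cnt G v1 {w} = cnt G v2 {w} :=
      balance hvBrel (by rw [hα']; exact hwmem)
    have hby : cnt G v1 {y} = cnt G v2 {y} :=
      balance hvBrel (by rw [hα']; exact hymem)
    have hsplit1 : cnt G v1 {w} + cnt G v1 {y} = 1 := by
      rw [← cnt_pair _ hwy, ← hReq]; exact ht1
    have hsplit2 : cnt G v2 {w} + cnt G v2 {y} = 1 := by
      rw [← cnt_pair _ hwy, ← hReq]; exact ht2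
    have hwyrel : crRel G p w y := by
      refine rel_of_mem_same hRP ?_ ?_
      · exact hReq ▸ self_mem_crClass α' w
      · exact hyR
    obtain ⟨p1, hp1'⟩ : ∃ x, p = x + 1 := ⟨p - 1, by omega⟩
    have hCp1 : C ∈ crPartition G p1 := by
      rw [show p1 = p - 1 by omega]; exact hC
    have hbalC : cnt G w C = cnt G y C := balance (by rw [← hp1']; exact hwyrel) hCp1
    have hCw : cnt G w C = cnt G w A + cnt G w B := by rw [hCAB]; exact cnt_union _ hABdisj
    have hCy : cnt G y C = cnt G y A + cnt G y B := by rw [hCAB]; exact cnt_union _ hABdisj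
    rcases Nat.eq_zero_or_pos (cnt G v1 {w}) with hc | hc
    · have h1 : cnt G v1 {y} = 1 := by omega
      have h2 : cnt G v2 {w} = 0 := by omega
      have h3 : cnt G v2 {y} = 1 := by omega
      have ha1 : G.Adj v1 y := adj_of_cnt_singleton (by omega)
      have ha2 : G.Adj v2 y := adj_of_cnt_singleton (by omega)
      have hn1' : ¬ G.Adj v1 w := not_adj_of_cnt_singleton hc
      have hn2 : ¬ G.Adj v2 w := not_adj_of_cnt_singleton h2
      have hwB : cnt G w B = 0 := by
        rw [hBeq, cnt_pair _ hv12, cnt_singleton_eq_zero (fun h' => hn1' h'.symm),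
          cnt_singleton_eq_zero (fun h' => hn2 h'.symm)]
      have hyB : cnt G y B = 2 := by
        rw [hBeq, cnt_pair _ hv12, cnt_singleton_eq_one ha1.symm,
          cnt_singleton_eq_one ha2.symm]
      omega
    · have h1 : cnt G v1 {w} = 1 := by omega
      have h0 : cnt G v1 {y} = 0 := by omega
      have h2 : cnt G v2 {w} = 1 := by omega
      have h3 : cnt G v2 {y} = 0 := by omega
      have ha1 : G.Adj v1 w := adj_of_cnt_singleton (by omega)
      have ha2 : G.Adj v2 w := adj_of_cnt_singleton (by omega)
      have hn1' : ¬ G.Adj v1 y := not_adj_of_cnt_singleton h0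
      have hn2 : ¬ G.Adj v2 y := not_adj_of_cnt_singleton h3
      have hwB : cnt G w B = 2 := by
        rw [hBeq, cnt_pair _ hv12, cnt_singleton_eq_one ha1.symm,
          cnt_singleton_eq_one ha2.symm]
      have hyB : cnt G y B = 0 := by
        rw [hBeq, cnt_pair _ hv12, cnt_singleton_eq_zero (fun h' => hn1' h'.symm),
          cnt_singleton_eq_zero (fun h' => hn2 h'.symm)]
      omega
  ------------------------------------------------------------------
  -- Dichotomy 2 : T is new at p-1
  ------------------------------------------------------------------
  have hTnew : T ∉ crPartition G p2 := by
    intro hTold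
    have hcntu1T : cnt G u1 T = 1 := by
      rw [hTeq, cnt_pair _ hr12, cnt_singleton_eq_one hr1u1.symm,
        cnt_singleton_eq_zero (fun h' => hr2u1 h'.symm)]
    have ht1 : cnt G v1 T = 1 := by
      rw [htwin v1 u1 hv1C hu1C _ hTold]; exact hcntu1T
    have ht2 : cnt G v2 T = 1 := by
      rw [htwin v2 u1 hv2C hu1C _ hTold]; exact hcntu1T
    have hr1T : r1 ∈ T := by rw [hTeq]; exact Set.mem_insert _ _
    have hr2T : r2 ∈ T := by rw [hTeq]; exact Set.mem_insert_of_mem _ rfl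
    have hrrel2 : crRel G (α+1) r1 r2 := rel_of_mem_same hTmem hr1T hr2T
    have hgbal : cnt G r1 B = cnt G r2 B :=
      balance hrrel2 (hBpersist α (by omega) (by omega))
    have hswap := cnt_pair_swap (G := G) hv12 hr12
    rw [← hTeq, ← hBeq] at hswap
    have hr1B : cnt G r1 B = 1 := by omega
    have hexp : cnt G r1 B = cnt G r1 {v1} + cnt G r1 {v2} := by
      rw [hBeq, cnt_pair _ hv12]
    have hc1 : cnt G r1 {v1} = cnt G v1 {r1} := cnt_singleton_comm _ _
    have hc2 : cnt G r1 {v2} = cnt G v2 {r1} := cnt_singleton_comm _ _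
    have hv3 : crRel G (α+2+1) v1 v2 :=
      rel_of_mem_same (hBpersist (α+3) (by omega) (by omega)) hv1B hv2B
    have hr1single : crClass G (α+1+1) r1 = {r1} := child_singleton hTmem hTdead hr12 hTeq
    have hr1mem : ({r1} : Set V) ∈ crPartition G (α+2) := by
      rw [show α+2 = α+1+1 by omega, ← hr1single]
      exact crClass_mem_partition _ r1
    have hbalr1 : cnt G v1 {r1} = cnt G v2 {r1} := balance hv3 hr1mem
    omega
  ------------------------------------------------------------------
  -- Dichotomy 3 : R' is new at p-1
  ------------------------------------------------------------------
  have hR'new : crClass G β' w2 ∉ crPartition G p2 := by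
    intro hR'old
    have ht1 : cnt G u1 (crClass G β' w2) = 1 := by
      rw [htwin u1 v1 hu1C hv1C _ hR'old]; exact hcntv1R'
    have hu1single : crClass G (α+1) u1 = {u1} := child_singleton hAα hAα1 hu12 hAeq
    obtain ⟨β'', hβ''⟩ : ∃ x, β' = x + 1 := ⟨β' - 1, by omega⟩
    have hu1s2 : crClass G β'' u1 = {u1} := by
      have hsub : crClass G β'' u1 ⊆ crClass G (α+1) u1 := crClass_anti (by omega) u1
      rw [hu1single] at hsub
      refine Set.Subset.antisymm hsub ?_
      intro q hq
      rcases hq with rfl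
      exact self_mem_crClass _ q
    have hu1mem : ({u1} : Set V) ∈ crPartition G β'' := by
      rw [← hu1s2]; exact crClass_mem_partition _ u1
    have hw2y2rel : crRel G β' w2 y2 := by
      refine rel_of_mem_same hR'mem ?_ hy2R
      exact self_mem_crClass β' w2
    have hbalu1 : cnt G w2 {u1} = cnt G y2 {u1} :=
      balance (by rw [← hβ'']; exact hw2y2rel) hu1mem
    have e1 : cnt G u1 (crClass G β' w2) = cnt G u1 {w2} + cnt G u1 {y2} := by
      rw [hR'eq, cnt_pair _ hw2y2]
    have c1 : cnt G u1 {w2} = cnt G w2 {u1} := cnt_singleton_comm _ _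
    have c2 : cnt G u1 {y2} = cnt G y2 {u1} := cnt_singleton_comm _ _
    omega
  ------------------------------------------------------------------
  -- pigeonhole: three distinct new classes at step p-1
  ------------------------------------------------------------------
  have hnew2 : (crPartition G (p2+1) \ crPartition G p2).ncard ≤ 2 :=
    (hsplit p2 (by omega)).2
  have hRT : crClass G α' w ≠ T := by
    intro heq
    exact hdead α' (α+1) (by omega) _ hRdead hRmem (by rw [heq]; exact hTmem)
  have hRR' : crClass G α' w ≠ crClass G β' w2 := by
    intro heq
    exact hdead α' β' (by omega) _ hRdead hRmem (by rw [heq]; exact hR'mem)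
  have hTR' : T ≠ crClass G β' w2 := by
    intro heq
    exact hdead (α+1) β' (by omega) _ hTdead hTmem (by rw [heq]; exact hR'mem)
  have hsub3 : ({crClass G α' w, T, crClass G β' w2} : Set (Set V)) ⊆
      crPartition G (p2+1) \ crPartition G p2 := by
    rintro X hX
    rcases hX with rfl | rfl | rfl
    · exact ⟨by rw [← hp2']; exact hRp1, hRnew⟩
    · exact ⟨by rw [← hp2']; exact hTp1, hTnew⟩
    · exact ⟨by rw [← hp2']; exact hR'p1, hR'new⟩
  have hcard3 : ({crClass G α' w, T, crClass G β' w2} : Set (Set V)).ncard = 3 := by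
    rw [Set.ncard_insert_of_notMem (by simp [hRT, hRR']) (Set.toFinite _),
      Set.ncard_pair hTR']
  have hle := Set.ncard_le_ncard hsub3 (Set.toFinite _)
  omega
end
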